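/- arXiv:1411.4708 — 5 statements merged into one kernel-verified Lean document; each statement's English description precedes it below -/
import Mathlib

section
/- Let f be a density on ℝ that is symmetric about 0 (f(−x) = f(x)), nonincreasing on [0,∞), integrates to 1, and is bounded by f(0). Then for every δ with |δ| ≤ 1, ∫_ℝ |f(t+δ) − f(t)| dt ≤ 3 f(0) |δ|. -/
/-!
Split the line at `-δ` and `0` (for `δ ≥ 0`). On `(0, ∞)` the function is nonincreasing, so
`|f(t+δ) - f(t)| = f(t) - f(t+δ)` there and the integral telescopes to `∫₀^δ f ≤ f(0) δ`; by
symmetry the same happens on `(-∞, -δ]`, leaving `∫_{-δ}^0 f`. On the middle interval of length `δ`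
the integrand is at most `f(0)`. Negative `δ` reduces to positive `δ` by translating by `δ`.
-/

open MeasureTheory Set intervalIntegral

namespace Function.Even

variable {f : ℝ → ℝ}

theorem monotoneOn_Iic (heven : f.Even) (hmono : AntitoneOn f (Ici 0)) :
    MonotoneOn f (Iic 0) := by
  intro x hx y hy hxy
  rw [← heven x, ← heven y]
  exact hmono (mem_Ici.2 (neg_nonneg.2 hy)) (mem_Ici.2 (neg_nonneg.2 hx)) (neg_le_neg hxy)

theorem le_apply_zero (heven : f.Even) (hmono : AntitoneOn f (Ici 0)) (x : ℝ) : f x ≤ f 0 := by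
  rcases le_total 0 x with hx | hx
  · exact hmono self_mem_Ici hx hx
  · exact heven.monotoneOn_Iic hmono hx self_mem_Iic hx

end Function.Even

section Translation

variable {E : Type*} [NormedAddCommGroup E] [NormedSpace ℝ E]

theorem setIntegral_preimage_add_right (f : ℝ → E) (c : ℝ) (s : Set ℝ) :
    ∫ t in (· + c) ⁻¹' s, f (t + c) = ∫ t in s, f t :=
  (measurePreserving_add_right volume c).setIntegral_preimage_emb
    (MeasurableEquiv.addRight c).measurableEmbedding f s

theorem setIntegral_Ioi_comp_add_right (f : ℝ → E) (a c : ℝ) :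
    ∫ t in Ioi a, f (t + c) = ∫ t in Ioi (a + c), f t := by
  simpa only [preimage_add_const_Ioi, add_sub_cancel_right] using
    setIntegral_preimage_add_right f c (Ioi (a + c))

theorem setIntegral_Iic_comp_add_right (f : ℝ → E) (a c : ℝ) :
    ∫ t in Iic a, f (t + c) = ∫ t in Iic (a + c), f t := by
  simpa only [preimage_add_const_Iic, add_sub_cancel_right] using
    setIntegral_preimage_add_right f c (Iic (a + c))

variable {f : ℝ → E}

theorem setIntegral_Ioi_sub_comp_add_right (hf : Integrable f) (a δ : ℝ) :
    ∫ t in Ioi a, (f t - f (t + δ)) = ∫ t in a..a + δ, f t := by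
  rw [integral_sub hf.integrableOn (hf.comp_add_right δ).integrableOn,
    setIntegral_Ioi_comp_add_right, integral_Ioi_sub_Ioi' hf.integrableOn hf.integrableOn]

theorem setIntegral_Iic_comp_add_right_sub (hf : Integrable f) (a δ : ℝ) :
    ∫ t in Iic a, (f (t + δ) - f t) = ∫ t in a..a + δ, f t := by
  rw [integral_sub (hf.comp_add_right δ).integrableOn hf.integrableOn,
    setIntegral_Iic_comp_add_right, integral_Iic_sub_Iic hf.integrableOn hf.integrableOn]

theorem integral_Iic_add_intervalIntegral_add_Ioi (hf : Integrable f) (a b : ℝ) :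
    (∫ t in Iic a, f t) + (∫ t in a..b, f t) + ∫ t in Ioi b, f t = ∫ t, f t := by
  rw [← integral_Iic_sub_Iic hf.integrableOn hf.integrableOn, add_sub_cancel,
    integral_Iic_add_Ioi hf.integrableOn hf.integrableOn]

end Translation

theorem intervalIntegral_le_mul_of_nonneg_of_le {g : ℝ → ℝ} {C : ℝ} (hg : ∀ x, 0 ≤ g x)
    (hC : ∀ x, g x ≤ C) (a b : ℝ) : ∫ x in a..b, g x ≤ C * |b - a| :=
  (le_abs_self _).trans <| norm_integral_le_of_norm_le_const fun x _ =>
    (Real.norm_of_nonneg (hg x)).trans_le (hC x)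

theorem integral_abs_comp_add_neg_sub (f : ℝ → ℝ) (δ : ℝ) :
    ∫ t, |f (t + -δ) - f t| = ∫ t, |f (t + δ) - f t| := by
  rw [← integral_add_right_eq_self (fun t => |f (t + -δ) - f t|) δ]
  simp only [add_neg_cancel_right, abs_sub_comm]

theorem integral_abs_comp_add_right_sub_le {f : ℝ → ℝ} (hf : Integrable f) (h0 : ∀ x, 0 ≤ f x)
    (heven : f.Even) (hmono : AntitoneOn f (Ici 0)) {δ : ℝ} (hδ : 0 ≤ δ) :
    ∫ t, |f (t + δ) - f t| ≤ 3 * f 0 * δ := by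
  have hbd := heven.le_apply_zero hmono
  have hg : Integrable fun t => |f (t + δ) - f t| := ((hf.comp_add_right δ).sub hf).abs
  have hright : ∫ t in Ioi 0, |f (t + δ) - f t| = ∫ t in 0..δ, f t := by
    rw [← zero_add δ, ← setIntegral_Ioi_sub_comp_add_right hf, zero_add]
    refine setIntegral_congr_fun measurableSet_Ioi fun t (ht : 0 < t) => ?_
    rw [abs_sub_comm, abs_of_nonneg (sub_nonneg.2 (hmono ht.le (mem_Ici.2 (by linarith)) (by linarith)))]
  have hleft : ∫ t in Iic (-δ), |f (t + δ) - f t| = ∫ t in -δ..0, f t := by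
    rw [← neg_add_cancel δ, ← setIntegral_Iic_comp_add_right_sub hf]
    refine setIntegral_congr_fun measurableSet_Iic fun t (ht : t ≤ -δ) => ?_
    rw [abs_of_nonneg (sub_nonneg.2
      (heven.monotoneOn_Iic hmono (mem_Iic.2 (by linarith)) (mem_Iic.2 (by linarith)) (by linarith)))]
  have hg_le x : |f (x + δ) - f x| ≤ f 0 :=
    abs_sub_le_of_nonneg_of_le (h0 _) (hbd _) (h0 _) (hbd _)
  rw [← integral_Iic_add_intervalIntegral_add_Ioi hg (-δ) 0, hleft, hright]
  have hleft_le := intervalIntegral_le_mul_of_nonneg_of_le h0 hbd (-δ) 0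
  have hmid_le := intervalIntegral_le_mul_of_nonneg_of_le (fun x => abs_nonneg _) hg_le (-δ) 0
  have hright_le := intervalIntegral_le_mul_of_nonneg_of_le h0 hbd 0 δ
  simp only [zero_sub, sub_zero, neg_neg, abs_of_nonneg hδ] at hleft_le hmid_le hright_le
  linarith

theorem L1_translation_bound_general
    (f : ℝ → ℝ) (h0 : ∀ x, 0 ≤ f x)
    (hint : ∫ x, f x = 1) (heven : ∀ x, f (-x) = f x)
    (hmono : AntitoneOn f (Set.Ici 0))
    (δ : ℝ) :
    ∫ t, |f (t + δ) - f t| ≤ 3 * f 0 * |δ| := by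
  have hf : Integrable f := integrable_of_integral_eq_one hint
  rcases le_total 0 δ with hδ | hδ
  · rw [abs_of_nonneg hδ]
    exact integral_abs_comp_add_right_sub_le hf h0 heven hmono hδ
  · rw [abs_of_nonpos hδ, ← integral_abs_comp_add_neg_sub]
    exact integral_abs_comp_add_right_sub_le hf h0 heven hmono (neg_nonneg.2 hδ)

/-- For a symmetric density `f`, nonincreasing on `[0,∞)` and bounded by `f 0`, the
`L¹`-modulus of continuity of translation satisfies `∫|f(t+δ) − f(t)| dt ≤ 3 f(0) |δ|`
for `|δ| ≤ 1`. -/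
theorem L1_translation_bound
    (f : ℝ → ℝ) (hmeas : Measurable f) (h0 : ∀ x, 0 ≤ f x)
    (hint : ∫ x, f x = 1) (heven : ∀ x, f (-x) = f x)
    (hmono : AntitoneOn f (Set.Ici 0)) (hbd : ∀ x, f x ≤ f 0)
    (δ : ℝ) (hδ : |δ| ≤ 1) :
    ∫ t, |f (t + δ) - f t| ≤ 3 * f 0 * |δ| :=
  L1_translation_bound_general f h0 hint heven hmono δ
end

section
/- Let p = λ e^{ψ(·−a)} + (1−λ) e^{ψ(·−b)} where ψ is an even upper semi-continuous concave function with ∫e^ψ = 1, a < b are real, and λ ∈ [0,1]. Then ∫_ℝ |log p(t)| p(t) dt < ∞. -/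
/-!
Log-concavity and symmetry make `f` maximal at `0`. Integrability forces `f x₀ ≤ f 0 / e` for
some `x₀ > 0`, and log-concavity along `[0, y]` then gives `f y ≤ f 0 · exp (-y / x₀)` for
`y ≥ x₀`. So `√f` is integrable, hence so is `√p ≤ √f(· - a) + √f(· - b)`, and since `p ≤ f 0`
the integrand is dominated by `2 √p + f 0 · p` via `|log u| u ≤ 2 √u + M u` on `[0, M]`.
-/

open MeasureTheory Real Set Filter
open scoped ENNReal

lemma abs_log_mul_self_le {u M : ℝ} (hu : 0 ≤ u) (huM : u ≤ M) :
    |log u| * u ≤ 2 * √u + M * u := by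
  rcases hu.eq_or_lt with rfl | hu
  · simp
  rcases le_total u 1 with h1 | h1
  · have hlt := abs_log_mul_self_rpow_lt u (1 / 2) hu h1 one_half_pos
    rw [← sqrt_eq_rpow, one_div_one_div] at hlt
    calc |log u| * u = |log u * √u| * √u := by
          rw [abs_mul, abs_of_nonneg (sqrt_nonneg u), mul_assoc, mul_self_sqrt hu.le]
      _ ≤ 2 * √u := by gcongr
      _ ≤ 2 * √u + M * u := le_add_of_nonneg_right (by nlinarith)
  · calc |log u| * u = log u * u := by rw [abs_of_nonneg (log_nonneg h1)]
      _ ≤ M * u := by gcongr; linarith [log_le_sub_one_of_pos hu]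
      _ ≤ 2 * √u + M * u := le_add_of_nonneg_left (by positivity)

lemma sqrt_convexComb_le_sqrt_add_sqrt {x y lam : ℝ} (hx : 0 ≤ x) (hy : 0 ≤ y) (hl0 : 0 ≤ lam)
    (hl1 : lam ≤ 1) : √(lam * x + (1 - lam) * y) ≤ √x + √y :=
  sqrt_le_iff.2 ⟨by positivity, by
    nlinarith [sq_sqrt hx, sq_sqrt hy, mul_nonneg (sqrt_nonneg x) (sqrt_nonneg y)]⟩

namespace MeasureTheory

variable {α : Type*} [MeasurableSpace α] {μ : Measure α}

theorem Integrable.abs_log_mul_self {g : α → ℝ} {M : ℝ} (hg : Integrable g μ)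
    (hsqrt : Integrable (fun x => √(g x)) μ) (h0 : 0 ≤ g) (hM : ∀ x, g x ≤ M) :
    Integrable (fun x => |log (g x)| * g x) μ := by
  refine ((hsqrt.const_mul 2).add (hg.const_mul M)).mono' ?_ (Eventually.of_forall fun x => ?_)
  · exact ((measurable_log.comp_aemeasurable hg.aemeasurable).abs.mul
      hg.aemeasurable).aestronglyMeasurable
  · rw [norm_of_nonneg (mul_nonneg (abs_nonneg _) (h0 x))]
    exact abs_log_mul_self_le (h0 x) (hM x)

theorem integrable_sqrt_convexComb {g h : α → ℝ} (hg : AEStronglyMeasurable g μ)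
    (hh : AEStronglyMeasurable h μ) (hg0 : 0 ≤ g) (hh0 : 0 ≤ h)
    (hgs : Integrable (fun x => √(g x)) μ) (hhs : Integrable (fun x => √(h x)) μ)
    {lam : ℝ} (hl0 : 0 ≤ lam) (hl1 : lam ≤ 1) :
    Integrable (fun x => √(lam * g x + (1 - lam) * h x)) μ := by
  refine (hgs.add hhs).mono' (continuous_sqrt.comp_aestronglyMeasurable
    ((hg.const_mul lam).add (hh.const_mul (1 - lam)))) (Eventually.of_forall fun x => ?_)
  rw [norm_of_nonneg (sqrt_nonneg _)]
  exact sqrt_convexComb_le_sqrt_add_sqrt (hg0 x) (hh0 x) hl0 hl1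

theorem IntegrableOn.exists_mem_le {g : α → ℝ} {s : Set α} (hg : IntegrableOn g s μ)
    (hs : MeasurableSet s) (hμs : μ s = ∞) {ε : ℝ} (hε : 0 < ε) : ∃ x ∈ s, g x ≤ ε := by
  by_contra! hgt
  have hconst : IntegrableOn (fun _ => ε) s μ :=
    hg.mono' aestronglyMeasurable_const <| ae_restrict_of_forall_mem hs fun x hx => by
      rw [norm_of_nonneg hε.le]; exact (hgt x hx).le
  rw [integrableOn_const_iff] at hconst
  simp_all

end MeasureTheory

lemma integrable_exp_neg_mul_abs {c : ℝ} (hc : 0 < c) :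
    Integrable fun x : ℝ => exp (-c * |x|) := by
  have hIoi : IntegrableOn (fun x : ℝ => exp (-c * |x|)) (Ioi 0) :=
    (exp_neg_integrableOn_Ioi 0 hc).congr_fun (fun x hx => by
      rw [abs_of_pos (mem_Ioi.1 hx)]) measurableSet_Ioi
  rw [← integrableOn_univ, ← Iio_union_Ici (a := (0 : ℝ)), integrableOn_union,
    integrableOn_Ici_iff_integrableOn_Ioi]
  refine ⟨?_, hIoi⟩
  rw [← (Measure.measurePreserving_neg (volume : Measure ℝ)).integrableOn_comp_preimage
      (Homeomorph.neg ℝ).measurableEmbedding]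
  simpa only [Function.comp_def, abs_neg, neg_preimage, neg_Iio, neg_zero] using hIoi

lemma integrable_sqrt_of_le_exp_neg_abs {f : ℝ → ℝ} (hf : AEStronglyMeasurable f)
    {c C : ℝ} (hc : 0 < c) (hfC : ∀ x, f x ≤ C * exp (-c * |x|)) :
    Integrable fun x => √(f x) := by
  refine ((integrable_exp_neg_mul_abs (half_pos hc)).const_mul √C).mono'
    (continuous_sqrt.comp_aestronglyMeasurable hf) (Eventually.of_forall fun x => ?_)
  rw [norm_of_nonneg (sqrt_nonneg _)]
  calc √(f x) ≤ √(C * exp (-c * |x|)) := sqrt_le_sqrt (hfC x)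
    _ = √C * exp (-(c / 2) * |x|) := by
      rw [sqrt_mul' _ (exp_pos _).le, ← exp_half]; ring_nf

lemma Function.Even.apply_abs {f : ℝ → ℝ} (hf : f.Even) (x : ℝ) : f |x| = f x := by
  rcases abs_choice x with h | h <;> simp only [h, hf x]

/-- For nonnegative `f`, log-concavity (with `log 0 = -∞`) written without logarithms. -/
def IsLogConcave (f : ℝ → ℝ) : Prop :=
  ∀ x y t : ℝ, 0 ≤ t → t ≤ 1 → f x ^ t * f y ^ (1 - t) ≤ f (t * x + (1 - t) * y)

namespace IsLogConcave

variable {f : ℝ → ℝ}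

lemma le_apply_zero (hf : IsLogConcave f) (h0 : 0 ≤ f) (heven : f.Even) (x : ℝ) :
    f x ≤ f 0 := by
  have h := hf x (-x) (1 / 2) (by norm_num) (by norm_num)
  rwa [heven x, show (1 : ℝ) - 1 / 2 = 1 / 2 by norm_num, ← sqrt_eq_rpow,
    mul_self_sqrt (h0 x), show 1 / 2 * x + 1 / 2 * -x = 0 by ring] at h

lemma apply_le_mul_exp (hf : IsLogConcave f) (h0 : 0 ≤ f) {x₀ y : ℝ} (hx₀ : 0 < x₀)
    (hy : x₀ ≤ y) (hf0 : 0 < f 0) (hfx₀ : f x₀ ≤ f 0 * exp (-1)) :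
    f y ≤ f 0 * exp (-x₀⁻¹ * y) := by
  set t := x₀ / y with ht
  have hy0 : 0 < y := hx₀.trans_le hy
  have ht0 : 0 < t := div_pos hx₀ hy0
  have h := hf y 0 t ht0.le ((div_le_one hy0).2 hy)
  rw [show t * y + (1 - t) * 0 = x₀ by rw [ht]; field_simp; ring] at h
  have hpow : (f 0 * exp (-x₀⁻¹ * y)) ^ t = f 0 ^ t * exp (-1) := by
    rw [mul_rpow hf0.le (exp_pos _).le, ← exp_mul, ht]
    congr 2
    field_simp
  rw [← rpow_le_rpow_iff (h0 y) (by positivity) ht0, hpow]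
  refine le_of_mul_le_mul_right ?_ (rpow_pos_of_pos hf0 (1 - t))
  calc f y ^ t * f 0 ^ (1 - t) ≤ f 0 * exp (-1) := h.trans hfx₀
    _ = f 0 ^ t * exp (-1) * f 0 ^ (1 - t) := by
      rw [mul_right_comm, ← rpow_add hf0, add_sub_cancel, rpow_one]

lemma exists_le_mul_exp_neg_abs (hf : IsLogConcave f) (h0 : 0 ≤ f) (heven : f.Even)
    (hint : Integrable f) : ∃ c > 0, ∃ C, ∀ x, f x ≤ C * exp (-c * |x|) := by
  rcases (h0 0).eq_or_lt with hf0 | hf0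
  · exact ⟨1, one_pos, 0, fun x => by simpa [← hf0] using hf.le_apply_zero h0 heven x⟩
  obtain ⟨x₀, hx₀ : 0 < x₀, hfx₀⟩ := hint.integrableOn.exists_mem_le measurableSet_Ioi
    volume_Ioi (ε := f 0 * exp (-1)) (mul_pos hf0 (exp_pos _))
  refine ⟨x₀⁻¹, inv_pos.2 hx₀, f 0 * exp 1, fun x => ?_⟩
  rw [← heven.apply_abs, mul_assoc]
  rcases le_total |x| x₀ with hle | hge
  · calc f |x| ≤ f 0 := hf.le_apply_zero h0 heven _
      _ ≤ f 0 * (exp 1 * exp (-x₀⁻¹ * |x|)) := by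
        rw [← exp_add]
        refine le_mul_of_one_le_right hf0.le (one_le_exp ?_)
        linarith [inv_mul_le_one_of_le₀ hle hx₀.le]
  · calc f |x| ≤ f 0 * exp (-x₀⁻¹ * |x|) := hf.apply_le_mul_exp h0 hx₀ hge hf0 hfx₀
      _ ≤ f 0 * (exp 1 * exp (-x₀⁻¹ * |x|)) := mul_le_mul_of_nonneg_left
          (le_mul_of_one_le_left (exp_pos _).le (one_le_exp zero_le_one)) hf0.le

lemma integrable_sqrt (hf : IsLogConcave f) (h0 : 0 ≤ f) (heven : f.Even)
    (hint : Integrable f) : Integrable fun x => √(f x) := by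
  obtain ⟨c, hc, C, hfC⟩ := hf.exists_le_mul_exp_neg_abs h0 heven hint
  exact integrable_sqrt_of_le_exp_neg_abs hint.aestronglyMeasurable hc hfC

end IsLogConcave

theorem mixture_entropy_integrable_general
    (f : ℝ → ℝ) (h0 : ∀ x, 0 ≤ f x)
    (hintg : Integrable f)
    (heven : ∀ x, f (-x) = f x)
    (hlc : ∀ x y t : ℝ, 0 ≤ t → t ≤ 1 →
      f x ^ t * f y ^ (1 - t) ≤ f (t * x + (1 - t) * y))
    (a b lam : ℝ) (hl0 : 0 ≤ lam) (hl1 : lam ≤ 1) :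
    Integrable (fun t =>
      |Real.log (lam * f (t - a) + (1 - lam) * f (t - b))| *
        (lam * f (t - a) + (1 - lam) * f (t - b))) := by
  have hf : IsLogConcave f := hlc
  have hsqrt := hf.integrable_sqrt h0 heven hintg
  have hmax := hf.le_apply_zero h0 heven
  have ha := hintg.comp_sub_right a
  have hb := hintg.comp_sub_right b
  refine Integrable.abs_log_mul_self (M := f 0)
    ((ha.const_mul lam).add (hb.const_mul (1 - lam)))
    (integrable_sqrt_convexComb ha.aestronglyMeasurable hb.aestronglyMeasurable
      (fun _ => h0 _) (fun _ => h0 _) (hsqrt.comp_sub_right a) (hsqrt.comp_sub_right b) hl0 hl1)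
    (fun t => ?_) (fun t => ?_)
  · have := h0 (t - a); have := h0 (t - b); positivity
  · nlinarith [hmax (t - a), hmax (t - b), h0 (t - a), h0 (t - b)]

/-- Let `f = e^ψ` be a zero-symmetric log-concave (upper semicontinuous) density and
`p = λ f(·−a) + (1−λ) f(·−b)` with `a < b`, `λ ∈ [0,1]`.
Then `∫ |log p(t)| p(t) dt < ∞`. -/
theorem mixture_entropy_integrable
    (f : ℝ → ℝ) (hmeas : Measurable f) (h0 : ∀ x, 0 ≤ f x)
    (husc : UpperSemicontinuous f)
    (hintg : Integrable f) (hden : ∫ x, f x = 1)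
    (heven : ∀ x, f (-x) = f x)
    (hlc : ∀ x y t : ℝ, 0 ≤ t → t ≤ 1 →
      f x ^ t * f y ^ (1 - t) ≤ f (t * x + (1 - t) * y))
    (a b lam : ℝ) (hab : a < b) (hl0 : 0 ≤ lam) (hl1 : lam ≤ 1) :
    Integrable (fun t =>
      |Real.log (lam * f (t - a) + (1 - lam) * f (t - b))| *
        (lam * f (t - a) + (1 - lam) * f (t - b))) :=
  mixture_entropy_integrable_general f h0 hintg heven hlc a b lam hl0 hl1
end

section
/- Suppose π ∈ (0,1)∖{1/2}, a < b, and f₀ is a density on ℝ with ∫|f₀| < ∞. If f̂ and f are zero-symmetric densities and ĝ = π f̂(·−a) + (1−π) f̂(·−b), g = π f(·−a) + (1−π) f(·−b), then when π < 1/2, ∫|f̂ − f| ≤ (1 − 2π)^{-1} ∫|ĝ − g|. -/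
open MeasureTheory

/-!
Write `D = f̂ - f`, so that `ĝ - g = π D(· - a) + (1 - π) D(· - b)`. Pointwise, the reverse
triangle inequality gives `|ĝ - g| ≥ (1 - π)|D(· - b)| - π|D(· - a)|`, and integrating with
translation invariance of Lebesgue measure yields `∫|ĝ - g| ≥ (1 - 2π) ∫|D|`.
-/

theorem norm_sub_norm_le_norm_convexCombo {E : Type*} [SeminormedAddCommGroup E]
    [NormedSpace ℝ E] {p : ℝ} (hp0 : 0 ≤ p) (hp1 : p ≤ 1) (u v : E) :
    (1 - p) * ‖v‖ - p * ‖u‖ ≤ ‖p • u + (1 - p) • v‖ := by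
  have h := norm_sub_norm_le ((1 - p) • v) (-(p • u))
  rw [sub_neg_eq_add, add_comm, norm_neg, norm_smul_of_nonneg hp0,
    norm_smul_of_nonneg (sub_nonneg.mpr hp1)] at h
  exact h

theorem mul_integral_norm_le_integral_norm_translate_convexCombo {G E : Type*}
    [MeasurableSpace G] [AddGroup G] [MeasurableAdd G] {μ : Measure G} [μ.IsAddRightInvariant]
    [NormedAddCommGroup E] [NormedSpace ℝ E] {p : ℝ} (hp0 : 0 ≤ p) (hp1 : p ≤ 1)
    {D : G → E} (hD : Integrable D μ) (a b : G) :
    (1 - 2 * p) * ∫ x, ‖D x‖ ∂μ ≤ ∫ x, ‖p • D (x - a) + (1 - p) • D (x - b)‖ ∂μ := by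
  have hDa := (hD.comp_sub_right a).norm.const_mul p
  have hDb := (hD.comp_sub_right b).norm.const_mul (1 - p)
  have hmix : Integrable (fun x => p • D (x - a) + (1 - p) • D (x - b)) μ :=
    ((hD.comp_sub_right a).smul p).add ((hD.comp_sub_right b).smul (1 - p))
  calc (1 - 2 * p) * ∫ x, ‖D x‖ ∂μ
      = ∫ x, ((1 - p) * ‖D (x - b)‖ - p * ‖D (x - a)‖) ∂μ := by
        rw [integral_sub hDb hDa, integral_const_mul, integral_const_mul,
          integral_sub_right_eq_self (‖D ·‖), integral_sub_right_eq_self (‖D ·‖)]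
        ring
    _ ≤ ∫ x, ‖p • D (x - a) + (1 - p) • D (x - b)‖ ∂μ :=
        integral_mono (hDb.sub hDa) hmix.norm
          fun x => norm_sub_norm_le_norm_convexCombo hp0 hp1 _ _

theorem inversion_L1_bound_general
    (pi a b : ℝ) (hpi0 : 0 < pi) (hpi : pi < 1 / 2)
    (fh f : ℝ → ℝ)
    (hifh : Integrable fh) (hif : Integrable f) :
    ∫ x, |fh x - f x| ≤
      (1 - 2 * pi)⁻¹ *
        ∫ x, |(pi * fh (x - a) + (1 - pi) * fh (x - b)) -
          (pi * f (x - a) + (1 - pi) * f (x - b))| := by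
  have hmix : ∀ x, (pi * fh (x - a) + (1 - pi) * fh (x - b)) -
      (pi * f (x - a) + (1 - pi) * f (x - b)) =
      pi • (fh - f) (x - a) + (1 - pi) • (fh - f) (x - b) := fun x => by
    simp only [Pi.sub_apply, smul_eq_mul]
    ring
  rw [le_inv_mul_iff₀ (by linarith)]
  simp only [hmix]
  simpa only [Real.norm_eq_abs, Pi.sub_apply] using
    mul_integral_norm_le_integral_norm_translate_convexCombo hpi0.le (by linarith)
      (hifh.sub hif) a b

/-- If `π ∈ (0, 1/2)`, `a < b`, and `f̂, f` are zero-symmetric densities with mixtures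
`ĝ = π f̂(·−a) + (1−π) f̂(·−b)` and `g = π f(·−a) + (1−π) f(·−b)`, then
`∫|f̂ − f| ≤ (1 − 2π)⁻¹ ∫|ĝ − g|`. -/
theorem inversion_L1_bound
    (pi a b : ℝ) (hpi0 : 0 < pi) (hpi : pi < 1 / 2) (hab : a < b)
    (fh f : ℝ → ℝ)
    (hmfh : Measurable fh) (hmf : Measurable f)
    (h0fh : ∀ x, 0 ≤ fh x) (h0f : ∀ x, 0 ≤ f x)
    (hifh : Integrable fh) (hif : Integrable f)
    (hnfh : ∫ x, fh x = 1) (hnf : ∫ x, f x = 1)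
    (hevfh : ∀ x, fh (-x) = fh x) (hevf : ∀ x, f (-x) = f x) :
    ∫ x, |fh x - f x| ≤
      (1 - 2 * pi)⁻¹ *
        ∫ x, |(pi * fh (x - a) + (1 - pi) * fh (x - b)) -
          (pi * f (x - a) + (1 - pi) * f (x - b))| :=
  inversion_L1_bound_general pi a b hpi0 hpi fh f hifh hif
end

section
/- Let ψ be a concave function on [0,∞) with values in [−∞,∞), let 0 < z₁ < z₂, set m = ψ(z₁) and M = ψ(z₂) with M > m + 1. If e^ψ integrates to at most 1 over ℝ, then the Lebesgue measure of {x : ψ(x) ≥ M − 1} is at least (z₂ − z₁)/(M − m), and consequently 1 ≥ e^{M−1}(z₂ − z₁)/(M − m). -/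
open MeasureTheory Set

/-!
On `[z₁, z₂]` the concave function `ψ` lies above its chord through `(z₁, m)` and `(z₂, M)`,
which has slope `(M - m) / (z₂ - z₁)`; so `ψ ≥ M - 1` on the last stretch of length
`(z₂ - z₁) / (M - m)` before `z₂`, an interval inside `[z₁, z₂]` because `M - m > 1`.
Integrating `e^ψ ≥ e^{M-1}` over that interval gives `e^{M-1} (z₂ - z₁) / (M - m) ≤ ∫ e^ψ ≤ 1`.
-/

lemma chord_le_of_concave {ψ : ℝ → EReal} {s : Set ℝ}
    (hconc : ∀ x ∈ s, ∀ y ∈ s, ∀ t : ℝ, 0 ≤ t → t ≤ 1 →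
      (t : EReal) * ψ x + ((1 - t : ℝ) : EReal) * ψ y ≤ ψ (t * x + (1 - t) * y))
    {z₁ z₂ m M : ℝ} (hz₁ : z₁ ∈ s) (hz₂ : z₂ ∈ s) (hz : z₁ < z₂)
    (hm : ψ z₁ = m) (hM : ψ z₂ = M) {x : ℝ} (hx : x ∈ Icc z₁ z₂) :
    ((M - (M - m) * (z₂ - x) / (z₂ - z₁) : ℝ) : EReal) ≤ ψ x := by
  have hlen : 0 < z₂ - z₁ := sub_pos.mpr hz
  set t := (z₂ - x) / (z₂ - z₁)
  have ht₀ : 0 ≤ t := div_nonneg (by linarith [hx.2]) hlen.le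
  have ht₁ : t ≤ 1 := (div_le_one hlen).mpr (by linarith [hx.1])
  have hx_eq : t * z₁ + (1 - t) * z₂ = x := by
    simp only [t]; field_simp; ring
  have hchord : M - (M - m) * (z₂ - x) / (z₂ - z₁) = t * m + (1 - t) * M := by
    simp only [t]; ring
  have := hconc z₁ hz₁ z₂ hz₂ t ht₀ ht₁
  rw [hx_eq, hm, hM] at this
  rw [hchord]
  exact_mod_cast this

lemma Icc_subset_superlevel_of_concave {ψ : ℝ → EReal} {s : Set ℝ}
    (hconc : ∀ x ∈ s, ∀ y ∈ s, ∀ t : ℝ, 0 ≤ t → t ≤ 1 →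
      (t : EReal) * ψ x + ((1 - t : ℝ) : EReal) * ψ y ≤ ψ (t * x + (1 - t) * y))
    {z₁ z₂ m M c : ℝ} (hz₁ : z₁ ∈ s) (hz₂ : z₂ ∈ s) (hz : z₁ < z₂)
    (hm : ψ z₁ = m) (hM : ψ z₂ = M) (hmM : m < M) (hc : c ≤ M - m) :
    Icc (z₂ - c * (z₂ - z₁) / (M - m)) z₂ ⊆ {x | ((M - c : ℝ) : EReal) ≤ ψ x} := by
  intro x hx
  have hlen : 0 < z₂ - z₁ := sub_pos.mpr hz
  have hslope : 0 < M - m := sub_pos.mpr hmM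
  have hx₁ : z₁ ≤ x := by
    have : c * (z₂ - z₁) / (M - m) ≤ z₂ - z₁ := by
      rw [div_le_iff₀ hslope]; nlinarith
    linarith [hx.1]
  refine le_trans (EReal.coe_le_coe_iff.mpr ?_) (chord_le_of_concave hconc hz₁ hz₂ hz hm hM ⟨hx₁, hx.2⟩)
  have hdist : z₂ - x ≤ c * (z₂ - z₁) / (M - m) := by linarith [hx.1]
  rw [le_div_iff₀ hslope] at hdist
  have hdrop : (M - m) * (z₂ - x) / (z₂ - z₁) ≤ c := by
    rw [div_le_iff₀ hlen]; linarith
  linarith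

lemma mul_measure_le_lintegral_of_forall_le {α : Type*} [MeasurableSpace α] {μ : Measure α}
    {f : α → ENNReal} {s : Set α} (hs : MeasurableSet s) {c : ENNReal} (hc : ∀ x ∈ s, c ≤ f x) :
    c * μ s ≤ ∫⁻ x, f x ∂μ :=
  calc c * μ s ≤ (⨅ x ∈ s, f x) * μ s := by gcongr; exact le_iInf₂ hc
    _ ≤ ∫⁻ x in s, f x ∂μ := iInf_mul_le_setLIntegral f hs
    _ ≤ ∫⁻ x, f x ∂μ := setLIntegral_le_lintegral s f

theorem level_set_measure_bound_general
    (ψ : ℝ → EReal)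
    (hconc : ∀ x ∈ Set.Ici (0:ℝ), ∀ y ∈ Set.Ici (0:ℝ), ∀ t : ℝ, 0 ≤ t → t ≤ 1 →
      (t : EReal) * ψ x + ((1 - t : ℝ) : EReal) * ψ y ≤ ψ (t * x + (1 - t) * y))
    (z₁ z₂ m M : ℝ) (hz₁ : 0 < z₁) (hz : z₁ < z₂)
    (hm : ψ z₁ = (m : EReal)) (hM : ψ z₂ = (M : EReal)) (hMm : m + 1 < M)
    (hint : ∫⁻ x, (ψ x).exp ≤ 1) :
    ENNReal.ofReal ((z₂ - z₁) / (M - m)) ≤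
        volume {x : ℝ | ((M - 1 : ℝ) : EReal) ≤ ψ x} ∧
      Real.exp (M - 1) * (z₂ - z₁) / (M - m) ≤ 1 := by
  have hsub : Icc (z₂ - (z₂ - z₁) / (M - m)) z₂ ⊆ {x | ((M - 1 : ℝ) : EReal) ≤ ψ x} := by
    simpa only [one_mul] using Icc_subset_superlevel_of_concave (c := 1) hconc
      (mem_Ici.mpr hz₁.le) (mem_Ici.mpr (hz₁.trans hz).le) hz hm hM (by linarith) (by linarith)
  have hvol : volume (Icc (z₂ - (z₂ - z₁) / (M - m)) z₂) = ENNReal.ofReal ((z₂ - z₁) / (M - m)) := by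
    rw [Real.volume_Icc, sub_sub_cancel]
  refine ⟨hvol ▸ measure_mono hsub, ?_⟩
  have hmarkov := (mul_measure_le_lintegral_of_forall_le (μ := volume) measurableSet_Icc
    fun x hx => EReal.exp_monotone (hsub hx)).trans hint
  rw [EReal.exp_coe, hvol, ← ENNReal.ofReal_mul (Real.exp_nonneg _), ENNReal.ofReal_le_one] at hmarkov
  rwa [mul_div_assoc]

/-- If `ψ` is concave on `[0,∞)` with `ψ(z₁) = m`, `ψ(z₂) = M`, `M > m + 1`,
`0 < z₁ < z₂`, and `∫ e^ψ ≤ 1`, then `Leb{ψ ≥ M − 1} ≥ (z₂−z₁)/(M−m)` and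
consequently `e^{M−1}(z₂−z₁)/(M−m) ≤ 1`. -/
theorem level_set_measure_bound
    (ψ : ℝ → EReal) (htop : ∀ x, ψ x ≠ ⊤)
    (hconc : ∀ x ∈ Set.Ici (0:ℝ), ∀ y ∈ Set.Ici (0:ℝ), ∀ t : ℝ, 0 ≤ t → t ≤ 1 →
      (t : EReal) * ψ x + ((1 - t : ℝ) : EReal) * ψ y ≤ ψ (t * x + (1 - t) * y))
    (z₁ z₂ m M : ℝ) (hz₁ : 0 < z₁) (hz : z₁ < z₂)
    (hm : ψ z₁ = (m : EReal)) (hM : ψ z₂ = (M : EReal)) (hMm : m + 1 < M)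
    (hint : ∫⁻ x, (ψ x).exp ≤ 1) :
    ENNReal.ofReal ((z₂ - z₁) / (M - m)) ≤
        volume {x : ℝ | ((M - 1 : ℝ) : EReal) ≤ ψ x} ∧
      Real.exp (M - 1) * (z₂ - z₁) / (M - m) ≤ 1 :=
  level_set_measure_bound_general ψ hconc z₁ z₂ m M hz₁ hz hm hM hMm hint
end

section
/- Let ψ₁ > ψ₂ be reals and z₁ < z₂. If ∫_{z₁}^{z₂} exp(ψ₁ + (ψ₂−ψ₁)(t−z₁)/(z₂−z₁)) dt ≤ 1, then ψ₁ − ψ₂ ≥ e^{ψ₁}(z₂ − z₁) − 1. -/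
/-!
With `A = e^{ψ₁}(z₂ - z₁)` and `s = ψ₁ - ψ₂ > 0`, the integral equals `A (1 - e^{-s}) / s`.
Since `(1 - e^{-s}) / s ≥ 1 / (s + 1)` (equivalently `e^s ≥ 1 + s`), the hypothesis gives
`A ≤ s + 1` whenever `A > 0`, and the case `A ≤ 0` is trivial.
-/

open intervalIntegral Real

theorem Real.inv_add_one_le_one_sub_exp_neg_div {t : ℝ} (ht : 0 < t) :
    (t + 1)⁻¹ ≤ (1 - exp (-t)) / t := by
  have hexp : (t + 1) * exp (-t) ≤ 1 := by
    calc (t + 1) * exp (-t) ≤ exp t * exp (-t) := by gcongr; exact add_one_le_exp t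
      _ = 1 := by rw [← exp_add, add_neg_cancel, exp_zero]
  rw [inv_eq_one_div, div_le_div_iff₀ (by linarith) ht]
  linarith

theorem integral_exp_linear_interpolation {ψ₁ ψ₂ : ℝ} (hψ : ψ₁ ≠ ψ₂) (z₁ z₂ : ℝ) :
    ∫ t in z₁..z₂, exp (ψ₁ + (ψ₂ - ψ₁) * (t - z₁) / (z₂ - z₁)) =
      exp ψ₁ * (z₂ - z₁) * (1 - exp (ψ₂ - ψ₁)) / (ψ₁ - ψ₂) := by
  rcases eq_or_ne z₁ z₂ with rfl | hz
  · simp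
  have hL : z₂ - z₁ ≠ 0 := sub_ne_zero.mpr hz.symm
  set c := (ψ₂ - ψ₁) / (z₂ - z₁) with hc_def
  have hc : c ≠ 0 := div_ne_zero (sub_ne_zero.mpr hψ.symm) hL
  have h_affine : ∀ t, ψ₁ + (ψ₂ - ψ₁) * (t - z₁) / (z₂ - z₁) = c * t + (ψ₁ - c * z₁) := by
    intro t; rw [hc_def]; field_simp; ring
  have h_end : c * z₂ + (ψ₁ - c * z₁) = ψ₂ := by rw [hc_def]; field_simp; ring
  simp_rw [h_affine]
  rw [integral_comp_mul_add exp hc, integral_exp, h_end, add_sub_cancel, smul_eq_mul, exp_sub,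
    hc_def]
  field_simp
  ring

theorem slope_lower_bound_general
    (ψ₁ ψ₂ z₁ z₂ : ℝ) (hψ : ψ₂ < ψ₁)
    (hint : (∫ t in z₁..z₂,
      Real.exp (ψ₁ + (ψ₂ - ψ₁) * (t - z₁) / (z₂ - z₁))) ≤ 1) :
    Real.exp ψ₁ * (z₂ - z₁) - 1 ≤ ψ₁ - ψ₂ := by
  set A := exp ψ₁ * (z₂ - z₁)
  have hs : 0 < ψ₁ - ψ₂ := sub_pos.mpr hψ
  rcases le_or_gt A 0 with hA | hA
  · linarith
  rw [integral_exp_linear_interpolation hψ.ne', mul_div_assoc,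
    show ψ₂ - ψ₁ = -(ψ₁ - ψ₂) by ring] at hint
  have hbound : A * (ψ₁ - ψ₂ + 1)⁻¹ ≤ 1 :=
    (mul_le_mul_of_nonneg_left (inv_add_one_le_one_sub_exp_neg_div hs) hA.le).trans hint
  rw [← div_eq_mul_inv, div_le_one (by linarith)] at hbound
  linarith

/-- If `ψ₁ > ψ₂`, `z₁ < z₂`, and the integral of the exponential of the linear
interpolant over `[z₁,z₂]` is at most `1`, then `ψ₁ − ψ₂ ≥ e^{ψ₁}(z₂−z₁) − 1`. -/
theorem slope_lower_bound
    (ψ₁ ψ₂ z₁ z₂ : ℝ) (hψ : ψ₂ < ψ₁) (hz : z₁ < z₂)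
    (hint : (∫ t in z₁..z₂,
      Real.exp (ψ₁ + (ψ₂ - ψ₁) * (t - z₁) / (z₂ - z₁))) ≤ 1) :
    Real.exp ψ₁ * (z₂ - z₁) - 1 ≤ ψ₁ - ψ₂ :=
  slope_lower_bound_general ψ₁ ψ₂ z₁ z₂ hψ hint
end
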